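/- arXiv:1601.00301 — 2 statements merged into one kernel-verified Lean document; each statement's English description precedes it below -/
import Mathlib

section
/- The square of functors commutes (up to natural isomorphism): starting from Ord, the composite of the forgetful functor Ord → Fin followed by adding a disjoint basepoint (−)₊ : Fin → Fin_*, is naturally isomorphic to the composite of [-] : Ord → Δ^op followed by the functor Δ^op → Fin_* given by [n] ↦ Hom_Δ([1],[n]) / ∂, i.e., the pointed set of monotone maps [1] → [n] with the constant maps collapsed to the basepoint. -/
/-- The map `[φ] : [J] → [I]` in `Δ` induced by a monotone map `φ : I → J`. -/
def bracketMap {m n : ℕ} (φ : Fin m →o Fin n) : Fin (n + 1) →o Fin (m + 1) where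
  toFun j :=
    ⟨(Finset.univ.filter fun i : Fin m => (φ i : ℕ) + 1 ≤ (j : ℕ)).card, by
      have h := Finset.card_filter_le (Finset.univ : Finset (Fin m))
        (fun i : Fin m => (φ i : ℕ) + 1 ≤ (j : ℕ))
      simp only [Finset.card_univ, Fintype.card_fin] at h
      omega⟩
  monotone' := by
    intro a b hab
    apply Fin.mk_le_mk.mpr
    apply Finset.card_le_card
    intro x hx
    simp only [Finset.mem_filter, Finset.mem_univ, true_and] at hx ⊢
    have hab' : (a : ℕ) ≤ (b : ℕ) := hab
    omega

/-- A monotone map `[m] → [1]` is constant. -/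
def IsConstMap {m : ℕ} (g : Fin (m + 1) →o Fin 2) : Prop := ∀ a b, g a = g b

/-- The setoid on `Hom_Δ([m],[1])` collapsing all constant (degenerate)
1-simplices to a single point. -/
def constSetoid (m : ℕ) : Setoid (Fin (m + 1) →o Fin 2) where
  r g h := g = h ∨ (IsConstMap g ∧ IsConstMap h)
  iseqv := by
    constructor
    · intro g; exact Or.inl rfl
    · rintro g h (rfl | ⟨h1, h2⟩)
      · exact Or.inl rfl
      · exact Or.inr ⟨h2, h1⟩
    · rintro g h k (rfl | ⟨h1, h2⟩) (rfl | ⟨h3, h4⟩)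
      · exact Or.inl rfl
      · exact Or.inr ⟨h3, h4⟩
      · exact Or.inr ⟨h1, h2⟩
      · exact Or.inr ⟨h1, h4⟩

/-!
A nonconstant monotone map `[m] → [1]` is determined by the place where it jumps from `0` to `1`:
it is the step map at a unique `i ∈ I`, while the constant maps are collapsed to the basepoint.
This gives the bijection `I₊ ≅ Hom_Δ([I],[1])/∂`. Naturality comes from the adjunction-like
identity `i < [φ] j ↔ φ i < j`, which says that precomposing the step at `i` with `[φ]` is the
step at `φ i`.
-/

def stepMap {m : ℕ} (i : Fin m) : Fin (m + 1) →o Fin 2 where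
  toFun x := if i.castSucc < x then 1 else 0
  monotone' a b hab := by
    dsimp only
    split_ifs with ha hb
    · exact le_rfl
    · exact absurd (ha.trans_le hab) hb
    · exact Fin.zero_le _
    · exact le_rfl

theorem stepMap_apply {m : ℕ} (i : Fin m) (x : Fin (m + 1)) :
    stepMap i x = if i.castSucc < x then 1 else 0 := rfl

theorem eq_stepMap_iff {m : ℕ} {g : Fin (m + 1) →o Fin 2} {i : Fin m} :
    g = stepMap i ↔ g i.castSucc = 0 ∧ g i.succ = 1 := by
  constructor
  · rintro rfl
    simp [stepMap_apply]
  · rintro ⟨h0, h1⟩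
    ext x
    rw [stepMap_apply]
    split_ifs with hx
    · have := g.monotone (Fin.castSucc_lt_iff_succ_le.mp hx)
      rw [h1] at this
      simp only [Fin.le_def] at this
      omega
    · have := g.monotone (not_lt.mp hx)
      rw [h0, Fin.le_zero_iff] at this
      rw [this]

theorem stepMap_injective {m : ℕ} : Function.Injective (stepMap (m := m)) := by
  intro i j h
  obtain ⟨h0, h1⟩ := eq_stepMap_iff.mp h
  simp only [stepMap_apply, Fin.lt_def, Fin.val_castSucc, Fin.val_succ] at h0 h1
  ext
  split_ifs at h0 h1 <;> omega

theorem not_isConstMap_stepMap {m : ℕ} (i : Fin m) : ¬ IsConstMap (stepMap i) := by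
  intro h
  simpa [stepMap_apply] using h i.castSucc i.succ

theorem exists_eq_stepMap_of_not_isConstMap {m : ℕ} {g : Fin (m + 1) →o Fin 2}
    (hg : ¬ IsConstMap g) : ∃ i, g = stepMap i := by
  simp only [eq_stepMap_iff]
  by_contra! hjump
  suffices ∀ x, g x = g 0 from hg fun a b => (this a).trans (this b).symm
  intro x
  induction x using Fin.induction with
  | zero => rfl
  | succ i ih =>
    have hmono := g.monotone (Fin.zero_le i.succ)
    have := hjump i
    simp only [Fin.ext_iff, Fin.le_def] at *
    omega

theorem bracketMap_apply_val {m n : ℕ} (φ : Fin m →o Fin n) (j : Fin (n + 1)) :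
    (bracketMap φ j : ℕ) = (Finset.univ.filter fun i : Fin m => (φ i : ℕ) + 1 ≤ (j : ℕ)).card :=
  rfl

/-- `[φ] j` counts the `k` with `φ k < j`; by monotonicity of `φ` they form an initial segment. -/
theorem castSucc_lt_bracketMap_iff {m n : ℕ} (φ : Fin m →o Fin n) (i : Fin m)
    (j : Fin (n + 1)) : i.castSucc < bracketMap φ j ↔ (φ i).castSucc < j := by
  rw [Fin.lt_def, Fin.lt_def, Fin.val_castSucc, Fin.val_castSucc, bracketMap_apply_val]
  constructor
  · intro hlt
    by_contra! hge
    have hsub : (Finset.univ.filter fun k : Fin m => (φ k : ℕ) + 1 ≤ (j : ℕ)) ⊆ Finset.Iio i := by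
      intro k hk
      rw [Finset.mem_filter] at hk
      rw [Finset.mem_Iio]
      by_contra! hik
      have := Fin.le_def.mp (φ.monotone hik)
      omega
    have := Finset.card_le_card hsub
    rw [Fin.card_Iio] at this
    omega
  · intro hlt
    have hsub : Finset.Iic i ⊆ (Finset.univ.filter fun k : Fin m => (φ k : ℕ) + 1 ≤ (j : ℕ)) := by
      intro k hk
      rw [Finset.mem_Iic] at hk
      have := Fin.le_def.mp (φ.monotone hk)
      simp only [Finset.mem_filter, Finset.mem_univ, true_and]
      omega
    have := Finset.card_le_card hsub
    rw [Fin.card_Iic] at this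
    omega

theorem stepMap_comp_bracketMap {m n : ℕ} (φ : Fin m →o Fin n) (i : Fin m) :
    (stepMap i).comp (bracketMap φ) = stepMap (φ i) := by
  ext j
  simp only [OrderHom.comp_coe, Function.comp_apply, stepMap_apply,
    castSucc_lt_bracketMap_iff]

theorem isConstMap_const {m : ℕ} (b : Fin 2) : IsConstMap (OrderHom.const (Fin (m + 1)) b) :=
  fun _ _ => rfl

theorem IsConstMap.comp {m n : ℕ} {g : Fin (m + 1) →o Fin 2} (hg : IsConstMap g)
    (f : Fin (n + 1) →o Fin (m + 1)) : IsConstMap (g.comp f) :=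
  fun a b => hg (f a) (f b)

def constQuotPrecomp {m n : ℕ} (f : Fin (n + 1) →o Fin (m + 1)) :
    Quotient (constSetoid m) → Quotient (constSetoid n) :=
  Quotient.map' (fun g => g.comp f) fun g h hgh => by
    rcases hgh with rfl | ⟨hg, hh⟩
    · exact Or.inl rfl
    · exact Or.inr ⟨hg.comp f, hh.comp f⟩

def toConstQuot (m : ℕ) : Option (Fin m) → Quotient (constSetoid m)
  | none => Quotient.mk _ (OrderHom.const _ 0)
  | some i => Quotient.mk _ (stepMap i)

theorem mk_eq_mk_stepMap_iff {m : ℕ} {g : Fin (m + 1) →o Fin 2} {i : Fin m} :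
    Quotient.mk (constSetoid m) g = Quotient.mk _ (stepMap i) ↔ g = stepMap i := by
  rw [Quotient.eq]
  exact ⟨fun h => h.resolve_right fun h => not_isConstMap_stepMap i h.2, Or.inl⟩

theorem toConstQuot_bijective (m : ℕ) : Function.Bijective (toConstQuot m) := by
  constructor
  · rintro (_ | i) (_ | j) h
    · rfl
    · exact absurd (mk_eq_mk_stepMap_iff.mp h ▸ isConstMap_const 0) (not_isConstMap_stepMap j)
    · exact absurd (mk_eq_mk_stepMap_iff.mp h.symm ▸ isConstMap_const 0) (not_isConstMap_stepMap i)
    · exact congrArg some (stepMap_injective (mk_eq_mk_stepMap_iff.mp h))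
  · rintro ⟨g⟩
    by_cases hg : IsConstMap g
    · exact ⟨none, Quotient.sound (Or.inr ⟨isConstMap_const 0, hg⟩)⟩
    · obtain ⟨i, rfl⟩ := exists_eq_stepMap_of_not_isConstMap hg
      exact ⟨some i, rfl⟩

theorem toConstQuot_map {a b : ℕ} (φ : Fin a →o Fin b) (x : Option (Fin a)) :
    toConstQuot b (x.map φ) = constQuotPrecomp (bracketMap φ) (toConstQuot a x) := by
  cases x with
  | none => rfl
  | some i => exact congrArg (Quotient.mk _) (stepMap_comp_bracketMap φ i).symm

/-- The square `Ord → Fin → Fin⋆` versus `Ord → Δᵒᵖ → Fin⋆` commutes up to a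
natural isomorphism `β`: for each finite ordinal `I` (with `m` elements) a
pointed bijection `I₊ ≅ Hom_Δ([I],[1])/∂`, natural with respect to every
monotone map `φ : I → J` (the right-hand functor acting by precomposition
with `[φ]`). -/
theorem ord_fin_delta_square_commutes :
    ∃ β : ∀ m : ℕ, Option (Fin m) ≃ Quotient (constSetoid m),
      (∀ m : ℕ, β m none =
        Quotient.mk (constSetoid m) ⟨fun _ => 0, monotone_const⟩) ∧
      (∀ (a b : ℕ) (φ : Fin a →o Fin b) (x : Option (Fin a)) (g : Fin (a + 1) →o Fin 2),
        β a x = Quotient.mk (constSetoid a) g →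
          β b (Option.map φ x) = Quotient.mk (constSetoid b) (g.comp (bracketMap φ))) := by
  refine ⟨fun m => Equiv.ofBijective _ (toConstQuot_bijective m), fun m => rfl, ?_⟩
  intro a b φ x g hx
  exact (toConstQuot_map φ x).trans (congrArg (constQuotPrecomp (bracketMap φ)) hx)
end

section
/- Let C be a category and M a monad on C with multiplication m : M∘M → M and unit e : Id → M. Define a 'categorical theory' T_M with: objects the objects of C; 1-morphisms x → y the C-morphisms Mx → y; and for a chain of 1-morphisms f_i : Mx_{i-1} → x_i (i = 1,…,n) and g : Mx_0 → x_n, the n-ary 2-multimaps f → g being the witnesses (if any) of commutativity of the square comparing f_n ∘ Mf_{n-1} ∘ ⋯ ∘ M^{n-1}f_1 ∘ (n-fold multiplication M^n x_0 → M x_0) with g, with composition defined in the obvious way. Then a monoid in T_M — i.e., an object x together with a 1-morphism a : Mx → x and compatible 2-multimaps from every iterate to a, including the nullary one from the unit — is precisely an M-algebra structure on x in the usual Eilenberg–Moore sense: a : Mx → x with a ∘ e_x = id_x and a ∘ m_x = a ∘ Ma. -/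
/-!
The condition for `n = 0` is the unit law `η ≫ a = 𝟙`. The right unit law of `M` makes the
two-fold multiplication equal to `μ`, so the condition for `n = 2` is associativity
`μ ≫ a = M a ≫ a`. Conversely, for an algebra, applying `M` to the condition for `n` and
rewriting `M a ≫ a` as `μ ≫ a` gives the condition for `n + 1`.
-/

open CategoryTheory

universe v u

variable {C : Type u} [Category.{v} C]

/-- The `n`-th power of the endofunctor of a monad. -/
def monadPow (M : Monad C) : ℕ → (C ⥤ C)
  | 0 => 𝟭 C
  | n + 1 => monadPow M n ⋙ M.toFunctor

/-- The `n`-fold multiplication `M^n ⟶ M` (for `n = 0` the unit `Id ⟶ M`);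
this is well defined thanks to the associativity of the monad. -/
def monadMu (M : Monad C) : ∀ n : ℕ, monadPow M n ⟶ M.toFunctor
  | 0 => M.η
  | n + 1 => Functor.whiskerRight (monadMu M n) M.toFunctor ≫ M.μ

/-- The composite `a ∘ M a ∘ ⋯ ∘ M^{n-1} a : M^n x ⟶ x` of the constant
nerve of 1-morphisms in the categorical theory `T_M` determined by
`a : M x ⟶ x` (for `n = 0`, the identity of `x`). -/
def algIter (M : Monad C) (x : C) (a : M.obj x ⟶ x) : ∀ n : ℕ, (monadPow M n).obj x ⟶ x
  | 0 => 𝟙 x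
  | n + 1 => M.map (algIter M x a n) ≫ a

section

variable (M : Monad C) (x : C)

theorem monadMu_two_app : (monadMu M 2).app x = M.μ.app x := by
  show M.map (M.map (M.η.app x) ≫ M.μ.app x) ≫ M.μ.app x = M.μ.app x
  rw [M.right_unit, M.map_id, Category.id_comp]

theorem algIter_two (a : M.obj x ⟶ x) : algIter M x a 2 = M.map a ≫ a := by
  show M.map (M.map (𝟙 x) ≫ a) ≫ a = M.map a ≫ a
  rw [M.map_id, Category.id_comp]

end

theorem CategoryTheory.Monad.Algebra.algIter_eq_monadMu_app_comp {M : Monad C} (A : M.Algebra)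
    (n : ℕ) : algIter M A.A A.a n = (monadMu M n).app A.A ≫ A.a := by
  induction n with
  | zero => exact A.unit.symm
  | succ n ih =>
    show M.map (algIter M A.A A.a n) ≫ A.a = (M.map ((monadMu M n).app A.A) ≫ M.μ.app A.A) ≫ A.a
    rw [ih, Functor.map_comp, Category.assoc, Category.assoc, A.assoc]

/-- Let `M` be a monad on `C` and let `T_M` be the categorical
theory with objects the objects of `C`, 1-morphisms `x → y` the `C`-morphisms
`M x ⟶ y`, and whose `n`-ary 2-multimaps `(f₁,…,f_n) → g` are the witnesses
of the commutativity `f_n ∘ M f_{n-1} ∘ ⋯ ∘ M^{n-1} f₁ = g ∘ (n`-fold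
multiplication`)`.  Then a monoid in `T_M` — an object `x` with a 1-morphism
`a : M x ⟶ x` and compatible 2-multimaps from every iterate of `a` to `a`,
including the nullary one — is precisely an Eilenberg–Moore `M`-algebra
structure on `x`: `a ∘ η_x = 𝟙 x` and `a ∘ μ_x = a ∘ M a`. -/
theorem monoid_in_TM_iff_eilenberg_moore_algebra
    (M : Monad C) (x : C) (a : M.obj x ⟶ x) :
    (∀ n : ℕ, algIter M x a n = (monadMu M n).app x ≫ a) ↔
      (M.η.app x ≫ a = 𝟙 x ∧ M.μ.app x ≫ a = M.map a ≫ a) := by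
  constructor
  · intro h
    have hassoc := h 2
    rw [algIter_two, monadMu_two_app] at hassoc
    exact ⟨(h 0).symm, hassoc.symm⟩
  · rintro ⟨hunit, hassoc⟩
    exact (⟨x, a, hunit, hassoc⟩ : M.Algebra).algIter_eq_monadMu_app_comp
end
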